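/- arXiv:2004.04038 — 3 statements merged into one kernel-verified Lean document; each statement's English description precedes it below -/
import Mathlib

section
/- (Sign cancellation for the diffusive part) Fix $t$ and suppose for each $i = 1,\dots,N-2$ that either $u_{i\pm1}(t)$ are on the same side of $u_i(t)$ in the monotone sense (i.e. $u_{i+1} \le u_i \le u_{i-1}$ or $u_{i+1} \ge u_i \ge u_{i-1}$), or both strictly above, or both strictly below. Let $s_i = \mathrm{sign}(u_i - u_{i+1}) - \mathrm{sign}(u_{i-1} - u_i)$ and $\dot u_i^d = \frac{u_i^2}{(\sigma^N)^2}[D^2(W_{i+1})(\phi(u_i) - \phi(u_{i+1})) - D^2(W_i)(\phi(u_{i-1}) - \phi(u_i))]\cdot(-1)$, i.e. $\dot u_i^d = -u_i(\dot W_{i+1}^d - \dot W_i^d)/(W_{i+1}-W_i)$ with $\dot W_i^d = \frac{1}{\sigma^N}D^2(W_i)(\phi(u_{i-1})-\phi(u_i))$. If $\phi$ is nondecreasing and $D \ge 0$, then $\sum_{i=1}^{N-2} s_i \dot u_i^d \le 0$. -/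
open Finset

lemma diffusive_key (A B : ℝ) (hA : 0 ≤ A) (hB : 0 ≤ B) (φ : ℝ → ℝ) (hφ : Monotone φ)
    (a b c : ℝ)
    (hcase : (c ≤ b ∧ b ≤ a) ∨ (a ≤ b ∧ b ≤ c) ∨ (b < c ∧ b < a) ∨ (c < b ∧ a < b)) :
    0 ≤ (Real.sign (b - c) - Real.sign (a - b)) * (A * (φ b - φ c) - B * (φ a - φ b)) := by
  rcases hcase with ⟨h1, h2⟩ | ⟨h1, h2⟩ | ⟨h1, h2⟩ | ⟨h1, h2⟩
  · rcases eq_or_lt_of_le h1 with h1e | h1l <;> rcases eq_or_lt_of_le h2 with h2e | h2l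
    · rw [show b - c = (0:ℝ) by linarith, show a - b = (0:ℝ) by linarith]; simp
    · rw [show b - c = (0:ℝ) by linarith, Real.sign_zero,
        Real.sign_of_pos (by linarith : (0:ℝ) < a - b)]
      have hc : φ c = φ b := by rw [h1e]
      nlinarith [mul_nonneg hB (sub_nonneg.2 (hφ h2l.le))]
    · rw [show a - b = (0:ℝ) by linarith, Real.sign_zero,
        Real.sign_of_pos (by linarith : (0:ℝ) < b - c)]
      have ha : φ a = φ b := by rw [← h2e]
      nlinarith [mul_nonneg hA (sub_nonneg.2 (hφ h1l.le))]
    · rw [Real.sign_of_pos (by linarith : (0:ℝ) < b - c),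
        Real.sign_of_pos (by linarith : (0:ℝ) < a - b)]
      simp
  · rcases eq_or_lt_of_le h1 with h1e | h1l <;> rcases eq_or_lt_of_le h2 with h2e | h2l
    · rw [show b - c = (0:ℝ) by linarith, show a - b = (0:ℝ) by linarith]; simp
    · rw [show a - b = (0:ℝ) by linarith, Real.sign_zero,
        Real.sign_of_neg (by linarith : b - c < 0)]
      have ha : φ a = φ b := by rw [h1e]
      nlinarith [mul_nonneg hA (sub_nonneg.2 (hφ h2l.le))]
    · rw [show b - c = (0:ℝ) by linarith, Real.sign_zero,
        Real.sign_of_neg (by linarith : a - b < 0)]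
      have hc : φ c = φ b := by rw [← h2e]
      nlinarith [mul_nonneg hB (sub_nonneg.2 (hφ h1l.le))]
    · rw [Real.sign_of_neg (by linarith : b - c < 0),
        Real.sign_of_neg (by linarith : a - b < 0)]
      simp
  · rw [Real.sign_of_neg (by linarith : b - c < 0),
      Real.sign_of_pos (by linarith : (0:ℝ) < a - b)]
    nlinarith [mul_nonneg hA (sub_nonneg.2 (hφ h1.le)),
      mul_nonneg hB (sub_nonneg.2 (hφ h2.le))]
  · rw [Real.sign_of_pos (by linarith : (0:ℝ) < b - c),
      Real.sign_of_neg (by linarith : a - b < 0)]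
    nlinarith [mul_nonneg hA (sub_nonneg.2 (hφ h1.le)),
      mul_nonneg hB (sub_nonneg.2 (hφ h2.le))]

/-- sign cancellation for the diffusive part of the time derivative
of the discrete densities. -/
theorem diffusive_sign_cancellation (N : ℕ) (hN : 3 ≤ N) (σN : ℝ) (hσN : 0 < σN)
    (W : ℕ → ℝ) (hord : ∀ i < N, W i < W (i + 1))
    (D φ : ℝ → ℝ) (hD : ∀ w, 0 ≤ D w) (hφ : Monotone φ)
    (u : ℕ → ℝ) (hu : ∀ i, u i = σN / (W (i + 1) - W i))
    (Wd : ℕ → ℝ) (hWd : ∀ i, 1 ≤ i → Wd i = D (W i) ^ 2 / σN * (φ (u (i - 1)) - φ (u i)))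
    (s : ℕ → ℝ) (hs : ∀ i, 1 ≤ i →
      s i = Real.sign (u i - u (i + 1)) - Real.sign (u (i - 1) - u i))
    (ud : ℕ → ℝ) (hud : ∀ i, ud i = -u i * (Wd (i + 1) - Wd i) / (W (i + 1) - W i))
    (hmono : ∀ i ∈ Finset.Icc 1 (N - 2),
      (u (i + 1) ≤ u i ∧ u i ≤ u (i - 1)) ∨
      (u (i - 1) ≤ u i ∧ u i ≤ u (i + 1)) ∨
      (u i < u (i + 1) ∧ u i < u (i - 1)) ∨
      (u (i + 1) < u i ∧ u (i - 1) < u i)) :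
    (∑ i ∈ Finset.Icc 1 (N - 2), s i * ud i) ≤ 0 := by
  apply Finset.sum_nonpos
  intro i hi
  rw [Finset.mem_Icc] at hi
  obtain ⟨hi1, hi2⟩ := hi
  have hΔ : 0 < W (i + 1) - W i := sub_pos.2 (hord i (by omega))
  have hb : 0 < u i := by
    rw [hu i]; exact div_pos hσN hΔ
  have hA : 0 ≤ D (W (i + 1)) ^ 2 / σN := div_nonneg (sq_nonneg _) hσN.le
  have hB : 0 ≤ D (W i) ^ 2 / σN := div_nonneg (sq_nonneg _) hσN.le
  have key := diffusive_key (D (W (i + 1)) ^ 2 / σN) (D (W i) ^ 2 / σN) hA hB φ hφ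
    (u (i - 1)) (u i) (u (i + 1)) (by
      rcases hmono i (Finset.mem_Icc.2 ⟨hi1, hi2⟩) with h | h | h | h
      · exact Or.inl ⟨h.1, h.2⟩
      · exact Or.inr (Or.inl ⟨h.1, h.2⟩)
      · exact Or.inr (Or.inr (Or.inl ⟨h.1, h.2⟩))
      · exact Or.inr (Or.inr (Or.inr ⟨h.1, h.2⟩)))
  rw [hs i hi1, hud i, hWd (i + 1) (by omega), hWd i hi1]
  simp only [Nat.add_sub_cancel]
  set S := Real.sign (u i - u (i + 1)) - Real.sign (u (i - 1) - u i) with hS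
  set P := D (W (i + 1)) ^ 2 / σN * (φ (u i) - φ (u (i + 1))) -
    D (W i) ^ 2 / σN * (φ (u (i - 1)) - φ (u i)) with hP
  have heq : S * (-u i * (D (W (i + 1)) ^ 2 / σN * (φ (u i) - φ (u (i + 1))) -
      D (W i) ^ 2 / σN * (φ (u (i - 1)) - φ (u i))) / (W (i + 1) - W i)) =
      -(S * P * u i / (W (i + 1) - W i)) := by
    rw [hP]; ring
  rw [heq]
  exact neg_nonpos.2 (div_nonneg (mul_nonneg key hb.le) hΔ.le)
end

section
/- (Discrete second-difference estimate for the nonlocal velocities) Let $\dot W_i^p = -\sum_h \sigma_h^N \sum_{j=0}^N P_{uh}(W_i, H_j)(W_i - H_j)$ with each $P_{uh}$ bounded, Lipschitz in the first variable with Lipschitz derivative $\partial_1 P_{uh}$, and all $H_j \in [-1,1]$, $\sum_h \sigma_h^N (N+1) \le C_0$. Then for any $W_i < W_{i+1} < W_{i+2}$ in $[-1,1]$: $\left|\frac{\dot W_{i+2}^p - \dot W_{i+1}^p}{W_{i+2} - W_{i+1}} - \frac{\dot W_{i+1}^p - \dot W_i^p}{W_{i+1} - W_i}\right| \le C_0 (W_{i+2}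 - W_i) \max_h \big(2\,\mathrm{Lip}[\partial_1 P_{uh}] + \|\partial_1 P_{uh}\|_\infty + \mathrm{Lip}[P_{uh}]\big)$. -/
open Finset

/-!
Each summand `w ↦ P(w, v) (w - v)` has derivative `∂₁P(w, v) (w - v) + P(w, v)`, which for
`v, w ∈ [-1, 1]` is Lipschitz with constant `2 Lip[∂₁P] + ‖∂₁P‖_∞ + Lip[P]` by the product rule.
By the mean value theorem each of the two difference quotients of a summand is a value of this
derivative at a point of `[Wᵢ, Wᵢ₊₂]`, so their difference is at most that constant times
`Wᵢ₊₂ - Wᵢ`. The second difference is linear in the function, and summing the bounds with the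
nonnegative weights `σₕ` gives the factor `∑ₕ σₕ (N + 1) ≤ C₀`.
-/

noncomputable def secondSlope (f : ℝ → ℝ) (a b c : ℝ) : ℝ :=
  (f c - f b) / (c - b) - (f b - f a) / (b - a)

section Linearity

variable (a b c : ℝ)

theorem secondSlope_neg (f : ℝ → ℝ) :
    secondSlope (fun x => -f x) a b c = -secondSlope f a b c := by
  simp only [secondSlope]; ring

theorem secondSlope_const_mul (r : ℝ) (f : ℝ → ℝ) :
    secondSlope (fun x => r * f x) a b c = r * secondSlope f a b c := by
  simp only [secondSlope]; ring

theorem secondSlope_sum {κ : Type*} (s : Finset κ) (f : κ → ℝ → ℝ) :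
    secondSlope (fun x => ∑ i ∈ s, f i x) a b c = ∑ i ∈ s, secondSlope (f i) a b c := by
  simp only [secondSlope, ← sum_sub_distrib, sum_div]

end Linearity

theorem abs_secondSlope_le_of_deriv_lipschitz {f f' : ℝ → ℝ} {K a b c : ℝ}
    (hf : ∀ x ∈ Set.Icc a c, HasDerivAt f (f' x) x)
    (hf' : ∀ x ∈ Set.Icc a c, ∀ y ∈ Set.Icc a c, |f' x - f' y| ≤ K * |x - y|)
    (hab : a < b) (hbc : b < c) :
    |secondSlope f a b c| ≤ K * (c - a) := by
  have hderiv_on {p q : ℝ} (hp : a ≤ p) (hq : q ≤ c) :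
      ∀ x ∈ Set.Icc p q, HasDerivAt f (f' x) x :=
    fun x hx => hf x ⟨hp.trans hx.1, hx.2.trans hq⟩
  have hcont_on {p q : ℝ} (hp : a ≤ p) (hq : q ≤ c) : ContinuousOn f (Set.Icc p q) :=
    fun x hx => (hderiv_on hp hq x hx).continuousAt.continuousWithinAt
  obtain ⟨ξ₂, hξ₂, hslope₂⟩ := exists_hasDerivAt_eq_slope f f' hbc
    (hcont_on hab.le le_rfl) fun x hx => hderiv_on hab.le le_rfl x (Set.Ioo_subset_Icc_self hx)
  obtain ⟨ξ₁, hξ₁, hslope₁⟩ := exists_hasDerivAt_eq_slope f f' hab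
    (hcont_on le_rfl hbc.le) fun x hx => hderiv_on le_rfl hbc.le x (Set.Ioo_subset_Icc_self hx)
  have hK : 0 ≤ K := by
    have hac := hf' c ⟨(hab.trans hbc).le, le_rfl⟩ a ⟨le_rfl, (hab.trans hbc).le⟩
    rw [abs_of_pos (sub_pos.2 (hab.trans hbc))] at hac
    exact nonneg_of_mul_nonneg_left ((abs_nonneg _).trans hac) (by linarith)
  have hξ : |ξ₂ - ξ₁| ≤ c - a := by
    rw [abs_le]; constructor <;> linarith [hξ₁.1, hξ₁.2, hξ₂.1, hξ₂.2]
  calc |secondSlope f a b c| = |f' ξ₂ - f' ξ₁| := by rw [secondSlope, hslope₂, hslope₁]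
    _ ≤ K * |ξ₂ - ξ₁| :=
      hf' ξ₂ ⟨by linarith [hξ₂.1], hξ₂.2.le⟩ ξ₁ ⟨hξ₁.1.le, by linarith [hξ₁.2]⟩
    _ ≤ K * (c - a) := mul_le_mul_of_nonneg_left hξ hK

theorem hasDerivAt_mul_sub {p : ℝ → ℝ} {p' v x : ℝ} (hp : HasDerivAt p p' x) :
    HasDerivAt (fun w => p w * (w - v)) (p' * (x - v) + p x) x := by
  simpa using hp.fun_mul ((hasDerivAt_id x).sub_const v)

theorem abs_deriv_mul_sub_sub_le {p p' : ℝ → ℝ} {Lp B Ld R v x y : ℝ}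
    (hp : |p x - p y| ≤ Lp * |x - y|) (hp'_bdd : |p' y| ≤ B)
    (hp'_lip : |p' x - p' y| ≤ Ld * |x - y|) (hR : |x - v| ≤ R) :
    |(p' x * (x - v) + p x) - (p' y * (y - v) + p y)| ≤ (R * Ld + B + Lp) * |x - y| := by
  have hsplit : (p' x * (x - v) + p x) - (p' y * (y - v) + p y)
      = (p' x - p' y) * (x - v) + p' y * (x - y) + (p x - p y) := by ring
  have h₁ : |p' x - p' y| * |x - v| ≤ Ld * |x - y| * R :=
    mul_le_mul hp'_lip hR (abs_nonneg _) ((abs_nonneg _).trans hp'_lip)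
  have h₂ : |p' y| * |x - y| ≤ B * |x - y| := mul_le_mul_of_nonneg_right hp'_bdd (abs_nonneg _)
  calc |(p' x * (x - v) + p x) - (p' y * (y - v) + p y)|
      ≤ |p' x - p' y| * |x - v| + |p' y| * |x - y| + |p x - p y| := by
        rw [hsplit, ← abs_mul, ← abs_mul]; exact abs_add_three _ _ _
    _ ≤ (R * Ld + B + Lp) * |x - y| := by linarith

theorem abs_secondSlope_mul_sub_le {p p' : ℝ → ℝ} {Lp B Ld R v a b c : ℝ}
    (hp : ∀ x, HasDerivAt p (p' x) x) (hp_lip : ∀ x y, |p x - p y| ≤ Lp * |x - y|)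
    (hp'_bdd : ∀ x, |p' x| ≤ B) (hp'_lip : ∀ x y, |p' x - p' y| ≤ Ld * |x - y|)
    (hR : ∀ x ∈ Set.Icc a c, |x - v| ≤ R) (hab : a < b) (hbc : b < c) :
    |secondSlope (fun w => p w * (w - v)) a b c| ≤ (R * Ld + B + Lp) * (c - a) :=
  abs_secondSlope_le_of_deriv_lipschitz (fun x _ => hasDerivAt_mul_sub (hp x))
    (fun x hx y _ => abs_deriv_mul_sub_sub_le (hp_lip x y) (hp'_bdd y) (hp'_lip x y) (hR x hx))
    hab hbc

theorem abs_sum_mul_sum_le {ι κ : Type*} (s : Finset ι) (t : Finset κ) {σ : ι → ℝ}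
    {x : ι → κ → ℝ} {M : ℝ} (hσ : ∀ i, 0 ≤ σ i) (hx : ∀ i j, |x i j| ≤ M) :
    |∑ i ∈ s, σ i * ∑ j ∈ t, x i j| ≤ (∑ i ∈ s, σ i * #t) * M := by
  calc |∑ i ∈ s, σ i * ∑ j ∈ t, x i j| ≤ ∑ i ∈ s, σ i * ∑ j ∈ t, |x i j| := by
        refine (abs_sum_le_sum_abs _ _).trans (sum_le_sum fun i _ => ?_)
        rw [abs_mul, abs_of_nonneg (hσ i)]
        exact mul_le_mul_of_nonneg_left (abs_sum_le_sum_abs _ _) (hσ i)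
    _ ≤ ∑ i ∈ s, σ i * (#t * M) := by
        gcongr with i
        · exact hσ i
        · simpa using sum_le_sum fun j (_ : j ∈ t) => hx i j
    _ = (∑ i ∈ s, σ i * #t) * M := by rw [sum_mul]; simp only [mul_assoc]

/-- discrete second-difference estimate for the nonlocal velocities. -/
theorem nonlocal_second_difference {ι : Type*} [Fintype ι] [Nonempty ι]
    (N : ℕ) (C0 : ℝ)
    (σhN LP BdP LdP : ι → ℝ) (hσhN : ∀ h, 0 ≤ σhN h)
    (hC0 : (∑ h, σhN h * (N + 1)) ≤ C0)
    (H : ι → ℕ → ℝ) (hH : ∀ h j, H h j ∈ Set.Icc (-1 : ℝ) 1)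
    (P dP : ι → ℝ → ℝ → ℝ)
    (hPlip : ∀ h w₁ w₂ v, |P h w₁ v - P h w₂ v| ≤ LP h * |w₁ - w₂|)
    (hdP : ∀ h v w, HasDerivAt (fun x => P h x v) (dP h w v) w)
    (hdPbd : ∀ h w v, |dP h w v| ≤ BdP h)
    (hdPlip : ∀ h w₁ w₂ v, |dP h w₁ v - dP h w₂ v| ≤ LdP h * |w₁ - w₂|)
    (V : ℝ → ℝ)
    (hV : ∀ x, V x = -∑ h, σhN h *
        ∑ j ∈ Finset.range (N + 1), P h x (H h j) * (x - H h j))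
    (Wi Wip Wipp : ℝ)
    (hWi : Wi ∈ Set.Icc (-1 : ℝ) 1) (hWipp : Wipp ∈ Set.Icc (-1 : ℝ) 1)
    (h1 : Wi < Wip) (h2 : Wip < Wipp) :
    |(V Wipp - V Wip) / (Wipp - Wip) - (V Wip - V Wi) / (Wip - Wi)|
      ≤ C0 * (Wipp - Wi) *
          (Finset.univ.sup' Finset.univ_nonempty
            fun h => 2 * LdP h + BdP h + LP h) := by
  set M := Finset.univ.sup' Finset.univ_nonempty fun h => 2 * LdP h + BdP h + LP h
  have hsummand (h : ι) (j : ℕ) :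
      |secondSlope (fun x => P h x (H h j) * (x - H h j)) Wi Wip Wipp| ≤ M * (Wipp - Wi) := by
    have hdist : ∀ x ∈ Set.Icc Wi Wipp, |x - H h j| ≤ 2 := fun x hx => by
      have hv := hH h j
      rw [abs_le]; constructor <;> linarith [hx.1, hx.2, hWi.1, hWipp.2, hv.1, hv.2]
    calc _ ≤ (2 * LdP h + BdP h + LP h) * (Wipp - Wi) :=
          abs_secondSlope_mul_sub_le (hdP h _) (hPlip h · · _) (hdPbd h · _) (hdPlip h · · _)
            hdist h1 h2
      _ ≤ M * (Wipp - Wi) := by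
          gcongr
          · linarith
          · exact le_sup' (fun h => 2 * LdP h + BdP h + LP h) (mem_univ h)
  have hexpand : secondSlope V Wi Wip Wipp = -∑ h, σhN h * ∑ j ∈ range (N + 1),
      secondSlope (fun x => P h x (H h j) * (x - H h j)) Wi Wip Wipp := by
    simp only [funext hV, secondSlope_neg, secondSlope_sum, secondSlope_const_mul]
  have hbound_nonneg : 0 ≤ M * (Wipp - Wi) :=
    (abs_nonneg _).trans (hsummand (Classical.arbitrary ι) 0)
  calc |secondSlope V Wi Wip Wipp|
      ≤ (∑ h, σhN h * #(range (N + 1))) * (M * (Wipp - Wi)) := by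
        rw [hexpand, abs_neg]; exact abs_sum_mul_sum_le _ _ hσhN hsummand
    _ ≤ C0 * (M * (Wipp - Wi)) := by
        rw [card_range]; push_cast; exact mul_le_mul_of_nonneg_right hC0 hbound_nonneg
    _ = C0 * (Wipp - Wi) * M := by ring
end

section
/- (Stationary state, linear diffusion, $\alpha = 2$) The function $u_\infty(w) = C_\infty(1+w)^{m_1^\infty/(2\lambda^2)}(1-w)^{-m_1^\infty/(2\lambda^2)}\exp\left(\frac{m_1^\infty w - \sigma}{\lambda^2(1-w^2)}\right)$ satisfies $\frac{\lambda^2}{2}(1-w^2)^2 u_\infty'(w) = (m_1^\infty - \sigma w)u_\infty(w)$ for all $w \in (-1,1)$. -/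
/-! `u∞` factors as `C (1+w)^a (1-w)^(-a) · exp g` with `a = m₁/(2λ²)`: the power part has
logarithmic derivative `2a/(1-w²) = m₁/(λ²(1-w²))` and `g' = (m₁(1+w²) - 2σw)/(λ²(1-w²)²)`,
which add up to `2(m₁ - σw)/(λ²(1-w²)²)`. -/

open Set

lemma hasDerivAt_mul_one_add_rpow_mul_one_sub_rpow_neg (c a : ℝ) {w : ℝ}
    (hw : w ∈ Ioo (-1 : ℝ) 1) :
    HasDerivAt (fun x : ℝ => c * (1 + x) ^ a * (1 - x) ^ (-a))
      (2 * a / (1 - w ^ 2) * (c * (1 + w) ^ a * (1 - w) ^ (-a))) w := by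
  obtain ⟨hw₁, hw₂⟩ := hw
  have hp : 0 < 1 + w := by linarith
  have hm : 0 < 1 - w := by linarith
  have hpm : 1 - w ^ 2 ≠ 0 := by nlinarith
  have hplus := (((hasDerivAt_id w).const_add 1).rpow_const (p := a) (Or.inl hp.ne')).const_mul c
  have hminus := ((hasDerivAt_id w).const_sub 1).rpow_const (p := -a) (Or.inl hm.ne')
  refine (hplus.mul hminus).congr_deriv ?_
  simp only [id, Real.rpow_sub_one hp.ne', Real.rpow_sub_one hm.ne']
  field_simp
  ring

lemma hasDerivAt_affine_div_mul_one_sub_sq (p q c : ℝ) {w : ℝ} (hc : c ≠ 0) (hw : 1 - w ^ 2 ≠ 0) :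
    HasDerivAt (fun x : ℝ => (p * x - q) / (c * (1 - x ^ 2)))
      ((p * (1 + w ^ 2) - 2 * q * w) / (c * (1 - w ^ 2) ^ 2)) w := by
  have hnum := ((hasDerivAt_id w).const_mul p).sub_const q
  have hden := ((hasDerivAt_pow 2 w).const_sub 1).const_mul c
  refine (hnum.div hden (mul_ne_zero hc hw)).congr_deriv ?_
  simp only [id]
  field_simp
  ring

theorem stationary_state_linear_alpha_two_general
    (lam σ m1inf Cinf : ℝ) (hlam : 0 < lam) :
    ∀ w ∈ Set.Ioo (-1 : ℝ) 1,
      lam ^ 2 / 2 * (1 - w ^ 2) ^ 2 *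
          deriv (fun x : ℝ =>
            Cinf * (1 + x) ^ (m1inf / (2 * lam ^ 2))
              * (1 - x) ^ (-m1inf / (2 * lam ^ 2))
              * Real.exp ((m1inf * x - σ) / (lam ^ 2 * (1 - x ^ 2)))) w
        = (m1inf - σ * w) *
            (Cinf * (1 + w) ^ (m1inf / (2 * lam ^ 2))
              * (1 - w) ^ (-m1inf / (2 * lam ^ 2))
              * Real.exp ((m1inf * w - σ) / (lam ^ 2 * (1 - w ^ 2)))) := by
  intro w hw
  have hw2 : 1 - w ^ 2 ≠ 0 := by nlinarith [hw.1, hw.2]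
  have hlam2 : lam ^ 2 ≠ 0 := by positivity
  have hu := (hasDerivAt_mul_one_add_rpow_mul_one_sub_rpow_neg Cinf (m1inf / (2 * lam ^ 2)) hw).mul
    (hasDerivAt_affine_div_mul_one_sub_sq m1inf σ (lam ^ 2) hlam2 hw2).exp
  simp only [neg_div]
  refine (congrArg (lam ^ 2 / 2 * (1 - w ^ 2) ^ 2 * ·) hu.deriv).trans ?_
  field_simp
  ring

/-- stationary state for linear diffusion with mobility
`D²(w) = (1-w²)²` (case `α = 2`). -/
theorem stationary_state_linear_alpha_two
    (lam σ m1inf Cinf : ℝ) (hlam : 0 < lam) (hσ : 0 < σ) (hC : 0 < Cinf) :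
    ∀ w ∈ Set.Ioo (-1 : ℝ) 1,
      lam ^ 2 / 2 * (1 - w ^ 2) ^ 2 *
          deriv (fun x : ℝ =>
            Cinf * (1 + x) ^ (m1inf / (2 * lam ^ 2))
              * (1 - x) ^ (-m1inf / (2 * lam ^ 2))
              * Real.exp ((m1inf * x - σ) / (lam ^ 2 * (1 - x ^ 2)))) w
        = (m1inf - σ * w) *
            (Cinf * (1 + w) ^ (m1inf / (2 * lam ^ 2))
              * (1 - w) ^ (-m1inf / (2 * lam ^ 2))
              * Real.exp ((m1inf * w - σ) / (lam ^ 2 * (1 - w ^ 2)))) :=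
  stationary_state_linear_alpha_two_general lam σ m1inf Cinf hlam
end
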